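/- Let K be a nonempty subset of the state set of a DFA such that every pair (p,q) with p, q ∈ K is stable. Then K is synchronizable, i.e., there is a word w with |K·w| = 1. -/

import Mathlib

/-- Action of a word (list of letters) on a state: the empty word acts as the
identity and a word acts by composition of the letter actions. -/
def actW {Q A : Type*} (δ : A → Q → Q) (w : List A) (q : Q) : Q :=
  w.foldl (fun s x => δ x s) q

/-- A pair of states `(p,q)` is stable if for every word `u` there is a word
`v` with `p·uv = q·uv`. -/
def Stable {Q A : Type*} (δ : A → Q → Q) (p q : Q) : Prop :=
  ∀ u : List A, ∃ v : List A, actW δ (u ++ v) p = actW δ (u ++ v) q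

/-!
Apply to `K` a word merging two of its distinct states: this exists because their pair is
stable, and the image is again a set all of whose pairs are stable, with fewer elements.
Induction on the size of `K` ends at a singleton.
-/

theorem Set.ncard_image_lt_of_eq {α β : Type*} {f : α → β} {s : Set α} {p q : α}
    (hs : s.Finite) (hp : p ∈ s) (hq : q ∈ s) (hpq : p ≠ q) (hf : f p = f q) :
    (f '' s).ncard < s.ncard :=
  (Set.ncard_image_le hs).lt_of_ne fun h => hpq (Set.injOn_of_ncard_image_eq h hs hp hq hf)

section

variable {Q A : Type*} {δ : A → Q → Q}

theorem actW_append (u v : List A) (q : Q) : actW δ (u ++ v) q = actW δ v (actW δ u q) := by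
  simp only [actW, List.foldl_append]

theorem Stable.exists_actW_eq {p q : Q} (h : Stable δ p q) : ∃ v, actW δ v p = actW δ v q :=
  h []

theorem Stable.actW {p q : Q} (h : Stable δ p q) (w : List A) :
    Stable δ (actW δ w p) (actW δ w q) := fun u => by
  obtain ⟨v, hv⟩ := h (w ++ u)
  exact ⟨v, by simpa only [← actW_append, List.append_assoc] using hv⟩

theorem exists_ncard_image_actW_eq_one {S : Set Q} (hfin : S.Finite) (hne : S.Nonempty)
    (hst : ∀ p ∈ S, ∀ q ∈ S, Stable δ p q) : ∃ w, (actW δ w '' S).ncard = 1 := by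
  induction hn : S.ncard using Nat.strong_induction_on generalizing S with
  | _ n ih =>
  rcases S.subsingleton_or_nontrivial with hsub | ⟨p, hp, q, hq, hpq⟩
  · obtain ⟨x, hx⟩ := hne
    refine ⟨[], ?_⟩
    simp [actW, hsub.eq_singleton_of_mem hx]
  obtain ⟨v, hv⟩ := (hst p hp q hq).exists_actW_eq
  have hlt : (actW δ v '' S).ncard < n := hn ▸ Set.ncard_image_lt_of_eq hfin hp hq hpq hv
  have hst' : ∀ p ∈ actW δ v '' S, ∀ q ∈ actW δ v '' S, Stable δ p q := by
    rintro _ ⟨p, hp, rfl⟩ _ ⟨q, hq, rfl⟩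
    exact (hst p hp q hq).actW v
  obtain ⟨w, hw⟩ := ih _ hlt (hfin.image _) (hne.image _) hst' rfl
  refine ⟨v ++ w, ?_⟩
  rwa [← Set.image_comp, show actW δ w ∘ actW δ v = actW δ (v ++ w) from
    funext fun q => (actW_append v w q).symm] at hw

end

/-- If `K` is a nonempty set of states all of whose pairs are stable, then `K`
is synchronizable: some word maps `K` to a single state. -/
theorem stmt15 {Q A : Type*} [Fintype Q] (δ : A → Q → Q) (K : Set Q)
    (hK : K.Nonempty) (hst : ∀ p ∈ K, ∀ q ∈ K, Stable δ p q) :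
    ∃ w : List A, Nat.card ((fun s => actW δ w s) '' K) = 1 := by
  obtain ⟨w, hw⟩ := exists_ncard_image_actW_eq_one K.toFinite hK hst
  exact ⟨w, by rw [Nat.card_coe_set_eq]; exact hw⟩
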